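/- For every valid configuration c = (z, σ, t), the set of reachable gold brackets is disjoint from the brackets already built: reach(c) ∩ t = ∅, and consequently reach(c) ⊆ t_G \ t. -/

import Mathlib

/-!
Formalization of the span-based Structure/Label transition parsing system of
Cross & Huang (2016), "Span-Based Constituency Parsing with a Structure-Label
System and Provably Optimal Dynamic Oracles".

A configuration is `(z, σ, t)` where `z` is the step number, `σ` the stack of
span boundaries and `t` the set of brackets built so far.  A bracket is a
triple `(X, i, j)` with `X` a nonterminal label and `i < j ≤ n` a span.
-/

namespace SpanParser

structure Config (N : Type*) where
  z : ℕ
  σ : List ℕ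
  t : Finset (N × ℕ × ℕ)

variable {N : Type*}

/-- The span of a bracket. -/
def span (b : N × ℕ × ℕ) : ℕ × ℕ := b.2

/-- Top (rightmost) boundary of the stack. -/
def topJ (σ : List ℕ) : ℕ := σ.getLastD 0

/-- Second-to-top boundary of the stack. -/
def topI (σ : List ℕ) : ℕ := σ.dropLast.getLastD 0

/-- Parser actions: shift, combine, label-`X`, and nolabel. -/
inductive Action (N : Type*) where
  | sh : Action N
  | comb : Action N
  | label : N → Action N
  | nolabel : Action N

variable [DecidableEq N]

/-- Applicability of an action at a configuration (for sentence length `n`). -/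
def App (n : ℕ) (c : Config N) : Action N → Prop
  | .sh      => Even c.z ∧ c.σ ≠ [] ∧ topJ c.σ < n
  | .comb    => Even c.z ∧ 3 ≤ c.σ.length
  | .label _ => Odd c.z ∧ 2 ≤ c.σ.length
  | .nolabel => Odd c.z ∧ 2 ≤ c.σ.length ∧ c.z < 4 * n - 1

/-- The result `τ(c)` of applying action `τ` to configuration `c`. -/
def doAct (c : Config N) : Action N → Config N
  | .sh      => ⟨c.z + 1, c.σ ++ [topJ c.σ + 1], c.t⟩
  | .comb    => ⟨c.z + 1, c.σ.dropLast.dropLast ++ [topJ c.σ], c.t⟩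
  | .label X => ⟨c.z + 1, c.σ, insert (X, topI c.σ, topJ c.σ) c.t⟩
  | .nolabel => ⟨c.z + 1, c.σ, c.t⟩

/-- The initial configuration `(0, [0], ∅)`. -/
def initial (N : Type*) : Config N := ⟨0, [0], ∅⟩

/-- One transition step `c ⊢ c'`. -/
def Step (n : ℕ) (c c' : Config N) : Prop := ∃ a, App n c a ∧ c' = doAct c a

/-- `⊢*`: reflexive-transitive closure of the transition relation. -/
def Reaches (n : ℕ) : Config N → Config N → Prop := Relation.ReflTransGen (Step n)

/-- A configuration is valid if it is reachable from the initial configuration. -/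
def Valid (n : ℕ) (c : Config N) : Prop := Reaches n (initial N) c

/-- A final configuration: `σ = [0, n]` and `z = 4n - 2`. -/
def Final (n : ℕ) (c : Config N) : Prop := c.σ = [0, n] ∧ c.z = 4 * n - 2

/-- `D(c)`: the set of trees of final configurations reachable from `c`. -/
def Dset (n : ℕ) (c : Config N) : Set (Finset (N × ℕ × ℕ)) :=
  {t' | ∃ c', Reaches n c c' ∧ Final n c' ∧ c'.t = t'}

/-- `(i,j) ⪯ (p,q)`: span `(i,j)` is encompassed by `(p,q)`, i.e. `p ≤ i < j ≤ q`. -/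
def Enc (s₁ s₂ : ℕ × ℕ) : Prop := s₂.1 ≤ s₁.1 ∧ s₁.1 < s₁.2 ∧ s₁.2 ≤ s₂.2

/-- `(i,j) ≺ (p,q)`: strict encompassment. -/
def SEnc (s₁ s₂ : ℕ × ℕ) : Prop := Enc s₁ s₂ ∧ s₁ ≠ s₂

/-- `tG` is a gold tree for sentence length `n`: valid spans, pairwise-distinct
spans, pairwise non-crossing spans, and exactly one bracket with span `(0, n)`
(uniqueness follows from distinctness of spans). -/
structure IsGold (n : ℕ) (tG : Finset (N × ℕ × ℕ)) : Prop where
  validSpans : ∀ b ∈ tG, (span b).1 < (span b).2 ∧ (span b).2 ≤ n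
  distinctSpans : ∀ b₁ ∈ tG, ∀ b₂ ∈ tG, span b₁ = span b₂ → b₁ = b₂
  noncrossing : ∀ b₁ ∈ tG, ∀ b₂ ∈ tG,
    Enc (span b₁) (span b₂) ∨ Enc (span b₂) (span b₁) ∨
    (span b₁).2 ≤ (span b₂).1 ∨ (span b₂).2 ≤ (span b₁).1
  root : ∃ X, (X, 0, n) ∈ tG

open Classical in
/-- `left(c)`: gold brackets (strictly, at even steps) encompassing the top
span whose left boundary occurs on the stack. -/
noncomputable def leftSet (tG : Finset (N × ℕ × ℕ)) (c : Config N) :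
    Finset (N × ℕ × ℕ) :=
  tG.filter fun b =>
    (if Even c.z then SEnc (topI c.σ, topJ c.σ) (span b)
     else Enc (topI c.σ, topJ c.σ) (span b)) ∧ (span b).1 ∈ c.σ

open Classical in
/-- `right(c)`: gold brackets entirely on the queue. -/
noncomputable def rightSet (tG : Finset (N × ℕ × ℕ)) (c : Config N) :
    Finset (N × ℕ × ℕ) :=
  tG.filter fun b => topJ c.σ ≤ (span b).1

open Classical in
/-- `reach(c)`: the reachable gold brackets (all of `t_G` at the initial
configuration, whose stack has fewer than two boundaries). -/
noncomputable def reach (tG : Finset (N × ℕ × ℕ)) (c : Config N) :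
    Finset (N × ℕ × ℕ) :=
  if c.σ.length < 2 then tG else leftSet tG c ∪ rightSet tG c

/-- The optimal tree `t*(c) = t ∪ reach(c)`. -/
noncomputable def tstar (tG : Finset (N × ℕ × ℕ)) (c : Config N) :
    Finset (N × ℕ × ℕ) :=
  c.t ∪ reach tG c

/-- `b = next(c)`: the `≺`-minimal element of `left(c)`. -/
def IsNext (tG : Finset (N × ℕ × ℕ)) (c : Config N) (b : N × ℕ × ℕ) : Prop :=
  b ∈ leftSet tG c ∧ ∀ b' ∈ leftSet tG c, Enc (span b) (span b')

/-- The dynamic-oracle policy `dyna(c)` as a predicate on actions. -/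
def Dyna (tG : Finset (N × ℕ × ℕ)) (c : Config N) (a : Action N) : Prop :=
  if c.σ.length < 2 then a = Action.sh
  else if Even c.z then
    ∃ b, IsNext tG c b ∧
      (((span b).1 = topI c.σ ∧ topJ c.σ < (span b).2 ∧ a = Action.sh) ∨
       ((span b).1 < topI c.σ ∧ (span b).2 = topJ c.σ ∧ a = Action.comb) ∨
       ((span b).1 < topI c.σ ∧ topJ c.σ < (span b).2 ∧
          (a = Action.sh ∨ a = Action.comb)))
  else
    (∃ X, (X, topI c.σ, topJ c.σ) ∈ tG ∧ a = Action.label X) ∨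
    ((∀ X, (X, topI c.σ, topJ c.σ) ∉ tG) ∧ a = Action.nolabel)

/-- `F1` of a predicted bracket set `t'` against the gold tree `tG`
(`0` when `t' ∩ tG = ∅`). -/
noncomputable def f1 (tG t' : Finset (N × ℕ × ℕ)) : ℝ :=
  if t' ∩ tG = ∅ then 0
  else
    (2 * (((t' ∩ tG).card : ℝ) / (tG.card : ℝ)) * (((t' ∩ tG).card : ℝ) / (t'.card : ℝ))) /
      ((((t' ∩ tG).card : ℝ) / (tG.card : ℝ)) + (((t' ∩ tG).card : ℝ) / (t'.card : ℝ)))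

/-- `F1(c)`: the best `F1` among trees reachable from `c`. -/
noncomputable def configF1 (n : ℕ) (tG : Finset (N × ℕ × ℕ)) (c : Config N) : ℝ :=
  sSup (f1 tG '' Dset n c)

/-- A run of (applicable) actions from one configuration to another. -/
inductive Run (n : ℕ) : Config N → List (Action N) → Config N → Prop
  | refl (c : Config N) : Run n c [] c
  | step {c c' : Config N} {as : List (Action N)} (a : Action N)
      (happ : App n c a) (h : Run n (doAct c a) as c') : Run n c (a :: as) c'

/-- A run all of whose actions follow the dynamic oracle. -/
inductive DynaRun (n : ℕ) (tG : Finset (N × ℕ × ℕ)) : Config N → Config N → Prop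
  | refl (c : Config N) : DynaRun n tG c c
  | step {c c' : Config N} (a : Action N) (happ : App n c a) (hdyna : Dyna tG c a)
      (h : DynaRun n tG (doAct c a) c') : DynaRun n tG c c'

def isSh : Action N → Bool
  | .sh => true
  | _ => false

def isComb : Action N → Bool
  | .comb => true
  | _ => false

/-- Label-step actions: `label-X` or `nolabel`. -/
def isLabelStep : Action N → Bool
  | .label _ => true
  | .nolabel => true
  | _ => false

/-!
Along any run, every built bracket `(p, q)` satisfies `p < q ≤ j`, where `(i, j)` is the top
span, and `q = j` forces `i ≤ p`; at odd steps even `i < p`, because the top span created by the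
preceding `sh` or `comb` is only labelled at the odd step itself. A bracket of `left(c)` ends at
`j` and starts at or before `i` (and differs from `(i, j)` at even steps), and one of `right(c)`
starts at or after `j`, so neither can have been built.
-/

lemma topJ_append_singleton (l : List ℕ) (j : ℕ) : topJ (l ++ [j]) = j := by
  simp [topJ]

lemma topJ_append_pair (l : List ℕ) (i j : ℕ) : topJ (l ++ [i, j]) = j := by
  simp [topJ]

lemma topI_append_pair (l : List ℕ) (i j : ℕ) : topI (l ++ [i, j]) = i := by
  simp [topI, List.dropLast_append_of_ne_nil]

lemma exists_eq_append_singleton {σ : List ℕ} (h : σ ≠ []) : ∃ l j, σ = l ++ [j] :=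
  ⟨σ.dropLast, σ.getLast h, (List.dropLast_append_getLast h).symm⟩

lemma exists_eq_append_pair {σ : List ℕ} (h : 2 ≤ σ.length) : ∃ l i j, σ = l ++ [i, j] := by
  obtain ⟨l', j, rfl⟩ := exists_eq_append_singleton (σ := σ) (by rintro rfl; simp at h)
  obtain ⟨l, i, rfl⟩ := exists_eq_append_singleton (σ := l') (by rintro rfl; simp at h)
  exact ⟨l, i, j, by simp⟩

lemma exists_eq_append_triple {σ : List ℕ} (h : 3 ≤ σ.length) :
    ∃ l g i j, σ = l ++ [g, i, j] := by
  obtain ⟨l', i, j, rfl⟩ := exists_eq_append_pair (σ := σ) (by omega)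
  obtain ⟨l, g, rfl⟩ := exists_eq_append_singleton (σ := l') (by rintro rfl; simp at h)
  exact ⟨l, g, i, j, by simp⟩

structure Invariant (c : Config N) : Prop where
  sorted : c.σ.Pairwise (· < ·)
  built : ∀ b ∈ c.t, (span b).1 < (span b).2 ∧ (span b).2 ≤ topJ c.σ ∧
    ((span b).2 = topJ c.σ → topI c.σ ≤ (span b).1 ∧ (Odd c.z → topI c.σ < (span b).1))

lemma reach_subset (tG : Finset (N × ℕ × ℕ)) (c : Config N) : reach tG c ⊆ tG := by
  intro b hb
  unfold reach at hb
  split_ifs at hb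
  · exact hb
  · simp only [leftSet, rightSet, Finset.mem_union, Finset.mem_filter] at hb
    tauto

lemma Invariant.disjoint_reach {tG : Finset (N × ℕ × ℕ)} {c : Config N} (hinv : Invariant c)
    (hlen : 2 ≤ c.σ.length) : Disjoint (reach tG c) c.t := by
  rw [reach, if_neg (by omega), Finset.disjoint_left]
  intro b hb hbt
  obtain ⟨hpq, hqj, hin⟩ := hinv.built b hbt
  rcases Finset.mem_union.mp hb with hleft | hright
  · simp only [leftSet, Finset.mem_filter] at hleft
    obtain ⟨-, henc, -⟩ := hleft
    split_ifs at henc with heven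
    · obtain ⟨⟨hp, -, hq⟩, hne⟩ := henc
      have hq := le_antisymm hqj hq
      exact hne (Prod.ext (le_antisymm (hin hq).1 hp) hq.symm)
    · obtain ⟨hp, -, hq⟩ := henc
      have := (hin (le_antisymm hqj hq)).2 (Nat.not_even_iff_odd.mp heven)
      omega
  · simp only [rightSet, Finset.mem_filter] at hright
    omega

lemma Invariant.doAct_sh {c : Config N} (hinv : Invariant c) (hne : c.σ ≠ []) :
    Invariant (doAct c .sh) := by
  obtain ⟨l, j, hσ⟩ := exists_eq_append_singleton hne
  obtain ⟨hsorted, hbuilt⟩ := hinv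
  rw [hσ] at hsorted hbuilt
  simp only [topJ_append_singleton] at hbuilt
  have hσ' : (doAct c .sh).σ = l ++ [j] ++ [j + 1] := by simp [doAct, hσ, topJ_append_singleton]
  refine ⟨?_, fun b hb => ?_⟩
  · rw [hσ']
    simp only [List.pairwise_append, List.mem_append, List.mem_singleton] at hsorted ⊢
    grind
  · obtain ⟨hpq, hqj, -⟩ := hbuilt b hb
    rw [hσ', topJ_append_singleton]
    omega

lemma Invariant.doAct_comb {c : Config N} (hinv : Invariant c) (hlen : 3 ≤ c.σ.length) :
    Invariant (doAct c .comb) := by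
  obtain ⟨l, g, i, j, hσ⟩ := exists_eq_append_triple hlen
  obtain ⟨hsorted, hbuilt⟩ := hinv
  have hσ' : (doAct c .comb).σ = l ++ [g, j] := by
    simp [doAct, hσ, topJ, List.dropLast_append_of_ne_nil]
  rw [hσ] at hsorted hbuilt
  have hgi : g < i := by
    simp only [List.pairwise_append, List.pairwise_cons] at hsorted
    simp_all
  simp only [show l ++ [g, i, j] = (l ++ [g]) ++ [i, j] by simp, topJ_append_pair,
    topI_append_pair] at hbuilt
  refine ⟨?_, fun b hb => ?_⟩
  · rw [hσ']
    refine hsorted.sublist (List.Sublist.append_left ?_ l)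
    simp
  · obtain ⟨hpq, hqj, hin⟩ := hbuilt b hb
    rw [hσ', topJ_append_pair, topI_append_pair]
    refine ⟨hpq, hqj, fun hq => ?_⟩
    have := (hin hq).1
    constructor <;> omega

lemma Invariant.doAct_label {c : Config N} (hinv : Invariant c) (hodd : Odd c.z)
    (hlen : 2 ≤ c.σ.length) (X : N) : Invariant (doAct c (.label X)) := by
  obtain ⟨l, i, j, hσ⟩ := exists_eq_append_pair hlen
  obtain ⟨hsorted, hbuilt⟩ := hinv
  have hij : i < j := by
    rw [hσ] at hsorted
    simp_all [List.pairwise_append]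
  have heven : ¬ Odd (c.z + 1) := by simpa [Nat.odd_add_one] using hodd
  refine ⟨hsorted, fun b hb => ?_⟩
  simp only [doAct, hσ, topJ_append_pair, topI_append_pair, Finset.mem_insert] at hb ⊢
  rcases hb with rfl | hb
  · simp [span, hij, heven]
  · obtain ⟨hpq, hqj, hin⟩ := hbuilt b hb
    simp only [hσ, topJ_append_pair, topI_append_pair] at hqj hin
    exact ⟨hpq, hqj, fun hq => ⟨(hin hq).1, fun h => absurd h heven⟩⟩

lemma Invariant.doAct_nolabel {c : Config N} (hinv : Invariant c) (hodd : Odd c.z) :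
    Invariant (doAct c .nolabel) := by
  have heven : ¬ Odd (c.z + 1) := by simpa [Nat.odd_add_one] using hodd
  refine ⟨hinv.sorted, fun b hb => ?_⟩
  obtain ⟨hpq, hqj, hin⟩ := hinv.built b hb
  exact ⟨hpq, hqj, fun hq => ⟨(hin hq).1, fun h => absurd h heven⟩⟩

lemma Invariant.step {n : ℕ} {c c' : Config N} (hinv : Invariant c) (hstep : Step n c c') :
    Invariant c' := by
  obtain ⟨a, happ, rfl⟩ := hstep
  cases a with
  | sh => exact hinv.doAct_sh happ.2.1
  | comb => exact hinv.doAct_comb happ.2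
  | label X => exact hinv.doAct_label happ.1 happ.2 X
  | nolabel => exact hinv.doAct_nolabel happ.1

lemma Valid.invariant {n : ℕ} {c : Config N} (hc : Valid n c) : Invariant c := by
  induction hc with
  | refl => exact ⟨by simp [initial], by simp [initial]⟩
  | tail _ hstep ih => exact ih.step hstep

lemma two_le_length_doAct {n : ℕ} {c : Config N} {a : Action N} (happ : App n c a) :
    2 ≤ (doAct c a).σ.length := by
  cases a with
  | sh => simpa [doAct, Nat.one_le_iff_ne_zero] using happ.2.1
  | comb =>
    have := happ.2
    simp only [doAct, List.length_append, List.length_dropLast, List.length_singleton]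
    omega
  | label X => exact happ.2
  | nolabel => exact happ.2.1

lemma Valid.eq_initial_or_two_le_length {n : ℕ} {c : Config N} (hc : Valid n c) :
    c = initial N ∨ 2 ≤ c.σ.length := by
  rcases hc.cases_tail with rfl | ⟨_, -, a, happ, rfl⟩
  · exact .inl rfl
  · exact .inr (two_le_length_doAct happ)

theorem reach_disjoint_general (n : ℕ) (tG : Finset (N × ℕ × ℕ))
    (c : Config N) (hc : Valid n c) :
    reach tG c ∩ c.t = ∅ ∧ reach tG c ⊆ tG \ c.t := by
  have hdisj : Disjoint (reach tG c) c.t := by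
    rcases hc.eq_initial_or_two_le_length with rfl | hlen
    · exact Finset.disjoint_empty_right _
    · exact hc.invariant.disjoint_reach hlen
  exact ⟨Finset.disjoint_iff_inter_eq_empty.mp hdisj,
    Finset.subset_sdiff.mpr ⟨reach_subset tG c, hdisj⟩⟩

/-- For every valid configuration `c = (z, σ, t)`, the reachable gold
brackets are disjoint from the brackets already built: `reach(c) ∩ t = ∅`,
and consequently `reach(c) ⊆ t_G \\ t`. -/
theorem reach_disjoint (n : ℕ) (hn : 1 ≤ n) (tG : Finset (N × ℕ × ℕ))
    (hG : IsGold n tG) (c : Config N) (hc : Valid n c) :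
    reach tG c ∩ c.t = ∅ ∧ reach tG c ⊆ tG \ c.t :=
  reach_disjoint_general n tG c hc

end SpanParser
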